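/- Let λ₊ > λ₋ and Λ < λ₋ be real, and define η₋(ξ) = (λ₊ + λ₋ − ξ − √((λ₊+λ₋+ξ)² + 2(λ₊−λ₋)²))/4. Then η₋(ξ) < Λ if and only if ξ > −(λ₊ + λ₋ + 2Λ)/2 + 2(λ₊ − Λ)(λ₋ − Λ)/(λ₊ + λ₋ − 2Λ). -/
import Mathlib


/-- For `λ₊ > λ₋ > Λ`: `η₋(ξ) < Λ` iff
`ξ > −(λ₊ + λ₋ + 2Λ)/2 + 2(λ₊ − Λ)(λ₋ − Λ)/(λ₊ + λ₋ − 2Λ)`. -/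
theorem stmt9 (lp lm Λ ξ : ℝ) (h : lm < lp) (hΛ : Λ < lm) :
    (lp + lm - ξ - Real.sqrt ((lp + lm + ξ)^2 + 2*(lp - lm)^2)) / 4 < Λ ↔
      -(lp + lm + 2*Λ)/2 + 2*(lp - Λ)*(lm - Λ)/(lp + lm - 2*Λ) < ξ := by
  have hs : 0 < lp + lm - 2*Λ := by linarith
  have hD : (0:ℝ) < (lp + lm + ξ)^2 + 2*(lp - lm)^2 := by nlinarith [sq_nonneg (lp+lm+ξ)]
  set r := Real.sqrt ((lp + lm + ξ)^2 + 2*(lp - lm)^2) with hrdef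
  have hr0 : 0 < r := Real.sqrt_pos.mpr hD
  have hr2 : r^2 = (lp + lm + ξ)^2 + 2*(lp - lm)^2 := Real.sq_sqrt hD.le
  have hT : -(lp + lm + 2*Λ)/2 + 2*(lp - Λ)*(lm - Λ)/(lp + lm - 2*Λ)
      = -2*Λ - (lp - lm)^2/(2*(lp + lm - 2*Λ)) := by
    field_simp
    ring
  rw [hT]
  have h2s : (0:ℝ) < 2*(lp + lm - 2*Λ) := by linarith
  constructor
  · intro h1
    have h2 : lp + lm - ξ - 4*Λ < r := by linarith
    rcases le_or_gt (lp + lm - ξ - 4*Λ) 0 with hB | hB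
    · have hq : 0 ≤ (lp - lm)^2/(2*(lp + lm - 2*Λ)) := by positivity
      linarith
    · have hsq : (lp + lm - ξ - 4*Λ)^2 < r^2 := by nlinarith
      have hkey : (-2*Λ - ξ) * (2*(lp + lm - 2*Λ)) < (lp - lm)^2 := by nlinarith
      have := (lt_div_iff₀ h2s).mpr hkey
      linarith
  · intro h1
    have hkey : (-2*Λ - ξ) * (2*(lp + lm - 2*Λ)) < (lp - lm)^2 :=
      (lt_div_iff₀ h2s).mp (by linarith)
    have h2 : lp + lm - ξ - 4*Λ < r := by
      rcases le_or_gt (lp + lm - ξ - 4*Λ) 0 with hB | hB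
      · linarith
      · nlinarith
    linarith
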